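/- arXiv:2202.11627 — 3 statements merged into one kernel-verified Lean document; each statement's English description precedes it below -/
import Mathlib

section
/- Let i_n denote the number of UC-equivalence classes of paths of length n in ℰ. Then i_0 = 1, i_1 = 0, i_2 = 1, i_3 = 1, i_4 = 2, i_5 = 4, i_6 = 5, and i_n = 2i_{n−1} − i_{n−2} + i_{n−3} − i_{n−4} + i_{n−5} − i_{n−6} + i_{n−7} for all n ≥ 7. -/
/-- Steps of a Dyck path with catastrophes: up-step `U`, down-step `D`,
and catastrophe step `C k` of size `k` (valid paths only use `k ≥ 2`). -/
inductive Step where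
  | U : Step
  | D : Step
  | C : ℕ → Step
  deriving DecidableEq

/-- The vertical displacement of a step. -/
def Step.val : Step → ℤ
  | .U => 1
  | .D => -1
  | .C k => -(k : ℤ)

/-- The height (ordinate) of the path after its first `i` steps. -/
def hgt (P : List Step) (i : ℕ) : ℤ := ((P.take i).map Step.val).sum

/-- `InE P` means `P` is a Dyck path with catastrophes (a member of ℰ):
it stays at height ≥ 0, ends on the x-axis, and every catastrophe step
`C k` has `k ≥ 2` and starts at height `k` (hence ends on the x-axis). -/
def InE (P : List Step) : Prop :=
  (∀ i, 0 ≤ hgt P i) ∧ hgt P P.length = 0 ∧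
    ∀ i k, P[i]? = some (Step.C k) → 2 ≤ k ∧ hgt P i = (k : ℤ)

/-- `(UD)^k`. -/
def UDpow (k : ℕ) : List Step := (List.replicate k [Step.U, Step.D]).flatten

/-- `(DU)^k`. -/
def DUpow (k : ℕ) : List Step := (List.replicate k [Step.D, Step.U]).flatten

/-- `U^k`. -/
def Upow (k : ℕ) : List Step := List.replicate k Step.U

/-- `C_s` with the convention `C_1 = D`. -/
def cfin (s : ℕ) : Step := if s = 1 then Step.D else Step.C s

/-- Test whether a step is a catastrophe step. -/
def isCatB : Step → Bool
  | .C _ => true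
  | _ => false

/-- The number of catastrophe steps in a path. -/
def catCount (P : List Step) : ℕ := P.countP isCatB

/-- The number of equivalence classes, for the equivalence `E`, of paths of
length `n` in ℰ. -/
noncomputable def nClasses (E : List Step → List Step → Prop) (n : ℕ) : ℕ :=
  Nat.card (Quot (fun P Q : {P : List Step // InE P ∧ P.length = n} => E P.1 Q.1))

/-- Two paths are `UC`-equivalent when, for every `k ≥ 2`, the occurrences of
the pattern `U C_k` appear at the same positions in both paths. -/
def UCEquiv (P Q : List Step) : Prop :=
  ∀ k, 2 ≤ k → ∀ i : ℕ,
    (P[i]? = some Step.U ∧ P[i + 1]? = some (Step.C k)) ↔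
    (Q[i]? = some Step.U ∧ Q[i + 1]? = some (Step.C k))


/-! Between consecutive occurrences of `U C_k` a path runs through a segment free of them, and
such a segment of length `L` from height `0` to height `h` exists iff `h ≤ L` and either `L - h`
is even or `L ≥ h + 5`: a catastrophe inside it must be entered by a down-step, so the segment
climbs to height `≥ 3`, falls to the axis and climbs again, which costs five extra steps. A class
is therefore a profile: blocks `(L, h)` (such a segment followed by `U C_{h+1}`) and a final
pattern-free excursion. Counting profiles gives `i n = [n ∉ {1, 3}] + S (n - 2) + S (n - 7)`,
where `S M = ∑_{u ≤ i < M, u ≡ i (mod 2)} i u` is the transfer by `x / ((1 - x)(1 - x²))`; hence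
`i n = i (n - 1) + i (n - 2) + i (n - 8)` for `n ≥ 10`. As
`1 - x - x² - x⁸ = (1 + x)(1 - 2x + x² - x³ + x⁴ - x⁵ + x⁶ - x⁷)`, the defect of the order-7
recurrence changes sign from one `n` to the next, so it vanishes once it vanishes initially. -/

def IsSegment : List Step → ℕ → ℕ → Prop
  | [], a, b => a = b
  | .U :: s, a, b => IsSegment s (a + 1) b
  | .D :: _, 0, _ => False
  | .D :: s, a + 1, b => IsSegment s a b
  | .C k :: s, a, b => 2 ≤ k ∧ a = k ∧ IsSegment s 0 b

theorem isSegment_append {s t : List Step} {a c : ℕ} :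
    IsSegment (s ++ t) a c ↔ ∃ b, IsSegment s a b ∧ IsSegment t b c := by
  induction s generalizing a with
  | nil => simp [IsSegment]
  | cons x s ih =>
    match x, a with
    | .U, a => simp [IsSegment, ih]
    | .D, 0 => simp [IsSegment]
    | .D, a + 1 => simp [IsSegment, ih]
    | .C k, a => simp [IsSegment, ih, and_assoc]

theorem IsSegment.le_add_length {s : List Step} {a b : ℕ} (h : IsSegment s a b) :
    b ≤ a + s.length := by
  induction s generalizing a with
  | nil => simp [IsSegment] at h; omega
  | cons x s ih =>
    match x, a, h with
    | .U, a, h => have := ih h; simp; omega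
    | .D, a + 1, h => have := ih h; simp; omega
    | .C k, a, h => have := ih h.2.2; simp; omega

theorem IsSegment.length_parity {s : List Step} {a b : ℕ} (h : IsSegment s a b)
    (hs : ∀ k, Step.C k ∉ s) : (a + s.length + b) % 2 = 0 := by
  induction s generalizing a with
  | nil => simp only [IsSegment] at h; simp [h]; omega
  | cons x s ih =>
    have hs' : ∀ k, Step.C k ∉ s := fun k hk => hs k (List.mem_cons_of_mem _ hk)
    match x, a, h with
    | .U, a, h => have := ih h hs'; simp; omega
    | .D, a + 1, h => have := ih h hs'; simp; omega
    | .C k, _, _ => exact absurd List.mem_cons_self (hs k)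

theorem hgt_nil (i : ℕ) : hgt [] i = 0 := by simp [hgt]

theorem hgt_zero (s : List Step) : hgt s 0 = 0 := rfl

theorem hgt_cons_succ (x : Step) (s : List Step) (i : ℕ) :
    hgt (x :: s) (i + 1) = x.val + hgt s i := by
  simp [hgt]

theorem isSegment_iff_hgt {s : List Step} {a b : ℕ} :
    IsSegment s a b ↔ (∀ i, 0 ≤ a + hgt s i) ∧ a + hgt s s.length = b ∧
      ∀ i k, s[i]? = some (Step.C k) → 2 ≤ k ∧ a + hgt s i = k := by
  induction s generalizing a with
  | nil => simp [IsSegment, hgt_nil]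
  | cons x s ih =>
    rw [← Nat.and_forall_add_one (p := fun i => 0 ≤ _ + hgt _ i),
      ← Nat.and_forall_add_one (p := fun i => ∀ k, (x :: s)[i]? = _ → _)]
    simp only [hgt_zero, hgt_cons_succ, List.length_cons, List.getElem?_cons_zero,
      List.getElem?_cons_succ]
    match x, a with
    | .U, a => simp [IsSegment, ih, Step.val, ← add_assoc]
    | .D, 0 =>
      simp only [IsSegment, false_iff]
      rintro ⟨⟨-, h⟩, -⟩
      simpa [Step.val, hgt_zero] using h 0
    | .D, a + 1 => simpa [IsSegment, ih, Step.val] using fun _ _ _ => by omega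
    | .C k, a =>
      simp only [IsSegment, ih, Step.val, Option.some.injEq, Step.C.injEq, forall_eq',
        Nat.cast_zero, zero_add, add_zero]
      constructor
      · rintro ⟨hk, rfl, h1, h2, h3⟩
        refine ⟨⟨by positivity, fun i => by simpa using h1 i⟩, by simpa using h2, ⟨hk, rfl⟩,
          fun i k hik => by simpa using h3 i k hik⟩
      · rintro ⟨⟨-, h1⟩, h2, ⟨hk, hak⟩, h3⟩
        obtain rfl : a = k := by exact_mod_cast hak
        exact ⟨hk, rfl, fun i => by simpa using h1 i, by simpa using h2,
          fun i k' hik => by simpa using h3 i k' hik⟩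

theorem inE_iff_isSegment {P : List Step} : InE P ↔ IsSegment P 0 0 := by
  simp [InE, isSegment_iff_hgt]

def UCAt (P : List Step) (i k : ℕ) : Prop :=
  P[i]? = some Step.U ∧ P[i + 1]? = some (Step.C k)

def UCFree (P : List Step) : Prop := ∀ i k, ¬ UCAt P i k

theorem ucAt_cons_zero {x : Step} {P : List Step} {k : ℕ} :
    UCAt (x :: P) 0 k ↔ x = Step.U ∧ P[0]? = some (Step.C k) := by
  simp [UCAt]

theorem ucAt_cons_succ {x : Step} {P : List Step} {i k : ℕ} :
    UCAt (x :: P) (i + 1) k ↔ UCAt P i k := by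
  simp [UCAt]

theorem ucAt_append_of_length_le {A B : List Step} {i k : ℕ} (h : A.length ≤ i) :
    UCAt (A ++ B) i k ↔ UCAt B (i - A.length) k := by
  simp only [UCAt, List.getElem?_append_right h,
    List.getElem?_append_right (by omega : A.length ≤ i + 1), Nat.sub_add_comm h]

theorem ucAt_append_of_lt {A B : List Step} {i k : ℕ} (h : i + 1 < A.length) :
    UCAt (A ++ B) i k ↔ UCAt A i k := by
  simp only [UCAt, List.getElem?_append_left h, List.getElem?_append_left (by omega : i < A.length)]

theorem ucFree_of_forall_ne {P : List Step} (hP : ∀ k, Step.C k ∉ P) : UCFree P :=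
  fun _ k h => hP k (List.mem_of_getElem? h.2)

theorem ucAt_append_UC {A Q : List Step} {c i k : ℕ} (hA : UCFree A) :
    UCAt (A ++ Step.U :: Step.C c :: Q) i k ↔
      (i = A.length ∧ k = c) ∨ (A.length + 2 ≤ i ∧ UCAt Q (i - (A.length + 2)) k) := by
  rcases lt_or_ge i A.length with hi | hi
  · refine iff_of_false (fun h => ?_) (by omega)
    rcases Nat.lt_or_ge (i + 1) A.length with hlt | hge
    · exact hA i k ((ucAt_append_of_lt hlt).1 h)
    · have h₂ := h.2
      rw [List.getElem?_append_right hge, (by omega : i + 1 - A.length = 0)] at h₂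
      simp at h₂
  · rw [ucAt_append_of_length_le hi]
    obtain ⟨j, rfl⟩ := Nat.exists_eq_add_of_le hi
    rw [Nat.add_sub_cancel_left]
    match j with
    | 0 => simp [ucAt_cons_zero, eq_comm]
    | 1 => simp [UCAt]
    | j + 2 => simp [ucAt_cons_succ, show A.length + (j + 2) - (A.length + 2) = j by omega]

def Feasible (L h : ℕ) : Prop := h ≤ L ∧ ((L - h) % 2 = 0 ∨ h + 5 ≤ L)

instance (L h : ℕ) : Decidable (Feasible L h) := inferInstanceAs (Decidable (_ ∧ _))

theorem feasible_of_isSegment {A : List Step} {h : ℕ} (hA : IsSegment A 0 h) (hfree : UCFree A) :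
    Feasible A.length h := by
  have hh : h ≤ A.length := by simpa using hA.le_add_length
  by_cases hC : ∃ k, Step.C k ∈ A
  · obtain ⟨k, hk⟩ := hC
    obtain ⟨A₁, A₂, rfl⟩ := List.append_of_mem hk
    obtain ⟨b, h₁, hk2, rfl, h₂⟩ : ∃ b, IsSegment A₁ 0 b ∧ 2 ≤ k ∧ b = k ∧ IsSegment A₂ 0 h := by
      simpa [isSegment_append, IsSegment] using hA
    have hA₂ : h ≤ A₂.length := by simpa using h₂.le_add_length
    obtain ⟨A₀, rfl, h₀⟩ : ∃ A₀, A₁ = A₀ ++ [Step.D] ∧ IsSegment A₀ 0 (b + 1) := by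
      rcases List.eq_nil_or_concat A₁ with rfl | ⟨A₀, x, rfl⟩
      · simp [IsSegment] at h₁; omega
      rw [List.concat_eq_append] at h₁ ⊢
      obtain ⟨c, h₀, hx⟩ := isSegment_append.1 h₁
      match x, c, hx with
      | .U, _, _ => exact absurd (by simp [UCAt]) (hfree A₀.length b)
      | .D, c + 1, hx => exact ⟨A₀, rfl, by simp only [IsSegment] at hx; rwa [← hx]⟩
      | .C _, _, hx => simp [IsSegment] at hx; omega
    have := h₀.le_add_length
    simp only [Feasible, List.length_append, List.length_cons, List.length_nil]
    omega
  · push Not at hC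
    have := hA.length_parity hC
    exact ⟨hh, Or.inl (by omega)⟩

theorem isSegment_UDpow (m a : ℕ) : IsSegment (UDpow m) a a := by
  induction m with
  | zero => simp [UDpow, IsSegment]
  | succ m ih => simpa [UDpow, List.replicate_succ, IsSegment] using ih

theorem isSegment_Upow (h a : ℕ) : IsSegment (Upow h) a (a + h) := by
  induction h generalizing a with
  | zero => simp [Upow, IsSegment]
  | succ h ih =>
    simpa [Upow, List.replicate_succ, IsSegment, add_assoc, add_comm 1] using ih (a + 1)

theorem not_C_mem_UDpow_append_Upow (m h k : ℕ) : Step.C k ∉ UDpow m ++ Upow h := by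
  simp [UDpow, Upow, List.mem_replicate]

def freeSegment (L h : ℕ) : List Step :=
  if (L - h) % 2 = 0 then UDpow ((L - h) / 2) ++ Upow h
  else [Step.U, Step.U, Step.U, Step.D, Step.C 2] ++ (UDpow ((L - h - 5) / 2) ++ Upow h)

theorem isSegment_freeSegment (L h : ℕ) : IsSegment (freeSegment L h) 0 h := by
  have hR (a : ℕ) : IsSegment (UDpow a ++ Upow h) 0 h :=
    isSegment_append.2 ⟨0, isSegment_UDpow _ _, by simpa using isSegment_Upow h 0⟩
  unfold freeSegment
  split
  · exact hR _
  · simpa [IsSegment] using hR _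

theorem length_freeSegment {L h : ℕ} (hLh : Feasible L h) : (freeSegment L h).length = L := by
  unfold freeSegment Feasible at *
  split <;> simp [UDpow, Upow] <;> omega

theorem ucFree_freeSegment (L h : ℕ) : UCFree (freeSegment L h) := by
  unfold freeSegment
  split
  · exact ucFree_of_forall_ne (not_C_mem_UDpow_append_Upow _ _)
  · intro i k hi
    match i with
    | 0 | 1 | 2 | 3 | 4 => simp [UCAt] at hi
    | i + 5 =>
      rw [ucAt_append_of_length_le (by simp)] at hi
      exact ucFree_of_forall_ne (not_C_mem_UDpow_append_Upow _ _) _ _ hi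

theorem ucFree_or_exists_first_UC (P : List Step) :
    UCFree P ∨ ∃ A c Q, UCFree A ∧ P = A ++ Step.U :: Step.C c :: Q := by
  classical
  by_cases hex : ∃ i k, UCAt P i k
  · right
    obtain ⟨p, ⟨c, hU, hC⟩, hmin⟩ : ∃ p, (∃ c, UCAt P p c) ∧ ∀ i < p, ∀ k, ¬ UCAt P i k :=
      ⟨Nat.find hex, Nat.find_spec hex, fun i hi k h => Nat.find_min hex hi ⟨k, h⟩⟩
    have hp : p + 1 < P.length := (List.getElem?_eq_some_iff.1 hC).1
    refine ⟨P.take p, c, P.drop (p + 2), fun i k hi => ?_, ?_⟩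
    · have hip : i + 1 < p := by
        by_contra! hle
        simpa [UCAt, List.getElem?_take, hle.not_gt] using hi.2
      have hi' : i < p := by omega
      exact hmin i hi' k (by simpa [UCAt, List.getElem?_take, hip, hi'] using hi)
    · conv_lhs => rw [← List.take_append_drop p P]
      rw [List.drop_eq_getElem_cons (by omega), List.drop_eq_getElem_cons hp]
      simp_all [List.getElem?_eq_getElem (by omega : p < P.length)]
  · push Not at hex
    exact Or.inl hex

/-- A profile `(d, t)`: the blocks `(L, h) ∈ d` stand for a pattern-free segment of length `L`
ending at height `h` followed by `U C_{h+1}`, and `t` is the length of the final excursion. -/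
def Admissible (d : List (ℕ × ℕ)) (t : ℕ) : Prop :=
  (∀ p ∈ d, 1 ≤ p.2 ∧ Feasible p.1 p.2) ∧ Feasible t 0

theorem admissible_cons {L h t : ℕ} {d : List (ℕ × ℕ)} :
    Admissible ((L, h) :: d) t ↔ (1 ≤ h ∧ Feasible L h) ∧ Admissible d t := by
  simp [Admissible, and_assoc]

def profileLength (d : List (ℕ × ℕ)) (t : ℕ) : ℕ := (d.map fun p => p.1 + 2).sum + t

theorem profileLength_cons (L h t : ℕ) (d : List (ℕ × ℕ)) :
    profileLength ((L, h) :: d) t = L + 2 + profileLength d t := by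
  simp [profileLength, add_assoc]

def profilePath : List (ℕ × ℕ) → ℕ → List Step
  | [], t => freeSegment t 0
  | (L, h) :: d, t => freeSegment L h ++ Step.U :: Step.C (h + 1) :: profilePath d t

theorem isSegment_profilePath {d : List (ℕ × ℕ)} {t : ℕ} (hx : Admissible d t) :
    IsSegment (profilePath d t) 0 0 := by
  induction d with
  | nil => exact isSegment_freeSegment t 0
  | cons p d ih =>
    obtain ⟨⟨hh, -⟩, hx⟩ := admissible_cons.1 hx
    refine isSegment_append.2 ⟨p.2, isSegment_freeSegment _ _, ?_⟩
    simpa [IsSegment] using ⟨by omega, ih hx⟩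

theorem inE_profilePath {d : List (ℕ × ℕ)} {t : ℕ} (hx : Admissible d t) :
    InE (profilePath d t) :=
  inE_iff_isSegment.2 (isSegment_profilePath hx)

theorem length_profilePath {d : List (ℕ × ℕ)} {t : ℕ} (hx : Admissible d t) :
    (profilePath d t).length = profileLength d t := by
  induction d with
  | nil => simpa [profilePath, profileLength] using length_freeSegment hx.2
  | cons p d ih =>
    obtain ⟨⟨-, hp⟩, hx⟩ := admissible_cons.1 hx
    simp only [profilePath, profileLength, List.length_append, List.length_cons, List.map_cons,
      List.sum_cons, length_freeSegment hp, ih hx] at *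
    omega

theorem ucAt_profilePath_cons {L h t i k : ℕ} {d : List (ℕ × ℕ)} (hLh : Feasible L h) :
    UCAt (profilePath ((L, h) :: d) t) i k ↔
      (i = L ∧ k = h + 1) ∨ (L + 2 ≤ i ∧ UCAt (profilePath d t) (i - (L + 2)) k) := by
  rw [profilePath, ucAt_append_UC (ucFree_freeSegment L h), length_freeSegment hLh]

theorem exists_profile {P : List Step} (hP : IsSegment P 0 0) :
    ∃ d t, Admissible d t ∧ profileLength d t = P.length ∧
      ∀ i k, UCAt P i k ↔ UCAt (profilePath d t) i k := by
  induction hn : P.length using Nat.strong_induction_on generalizing P with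
  | _ n ih =>
  rcases ucFree_or_exists_first_UC P with hfree | ⟨A, c, Q, hA, rfl⟩
  · exact ⟨[], P.length, ⟨by simp, feasible_of_isSegment hP hfree⟩, by simp [profileLength, hn],
      fun i k => iff_of_false (hfree i k) (ucFree_freeSegment _ _ i k)⟩
  · obtain ⟨h, hAh, hc, rfl, hQ⟩ : ∃ h, IsSegment A 0 h ∧ 2 ≤ c ∧ h + 1 = c ∧ IsSegment Q 0 0 := by
      simpa [isSegment_append, IsSegment] using hP
    obtain ⟨d, t, hx, hlen, hpat⟩ := ih Q.length (by simp [← hn]; omega) hQ rfl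
    have hLh := feasible_of_isSegment hAh hA
    refine ⟨(A.length, h) :: d, t, admissible_cons.2 ⟨⟨by omega, hLh⟩, hx⟩, ?_, fun i k => ?_⟩
    · simp only [profileLength, List.map_cons, List.sum_cons, List.length_append,
        List.length_cons] at hlen hn ⊢
      omega
    · rw [ucAt_append_UC hA, ucAt_profilePath_cons hLh, hpat]

theorem ucAt_profilePath_cons_self {L h t : ℕ} {d : List (ℕ × ℕ)} (hLh : Feasible L h) :
    UCAt (profilePath ((L, h) :: d) t) L (h + 1) :=
  (ucAt_profilePath_cons hLh).2 (Or.inl ⟨rfl, rfl⟩)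

theorem eq_of_ucAt_profilePath_iff {d d' : List (ℕ × ℕ)} {t t' : ℕ} (hx : Admissible d t)
    (hx' : Admissible d' t') (hlen : profileLength d t = profileLength d' t')
    (hpat : ∀ i k, UCAt (profilePath d t) i k ↔ UCAt (profilePath d' t') i k) :
    d = d' ∧ t = t' := by
  induction d generalizing d' with
  | nil =>
    cases d' with
    | nil => simpa [profileLength] using hlen
    | cons p d' =>
      have hp := (admissible_cons.1 hx').1.2
      exact absurd ((hpat _ _).2 (ucAt_profilePath_cons_self hp)) (ucFree_freeSegment _ _ _ _)
  | cons p d ih =>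
    obtain ⟨L, h⟩ := p
    obtain ⟨⟨-, hLh⟩, hx⟩ := admissible_cons.1 hx
    cases d' with
    | nil =>
      exact absurd ((hpat _ _).1 (ucAt_profilePath_cons_self hLh)) (ucFree_freeSegment _ _ _ _)
    | cons p' d' =>
      obtain ⟨L', h'⟩ := p'
      obtain ⟨⟨-, hLh'⟩, hd'⟩ := admissible_cons.1 hx'
      have e := (ucAt_profilePath_cons hLh').1 ((hpat _ _).1 (ucAt_profilePath_cons_self hLh))
      have e' := (ucAt_profilePath_cons hLh).1 ((hpat _ _).2 (ucAt_profilePath_cons_self hLh'))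
      obtain ⟨rfl, rfl⟩ : L = L' ∧ h = h' := by omega
      have htail : ∀ i k, UCAt (profilePath d t) i k ↔ UCAt (profilePath d' t') i k := fun i k => by
        have hi : ¬ (i + (L + 2) = L ∧ k = h + 1) := by omega
        simpa [ucAt_profilePath_cons hLh, hi] using hpat (i + (L + 2)) k
      have htail_len : profileLength d t = profileLength d' t' := by
        simp only [profileLength, List.map_cons, List.sum_cons] at hlen ⊢
        omega
      obtain ⟨rfl, rfl⟩ := ih hx hd' htail_len htail
      exact ⟨rfl, rfl⟩

theorem two_le_of_ucAt {P : List Step} {i k : ℕ} (hP : InE P) (h : UCAt P i k) : 2 ≤ k :=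
  (hP.2.2 _ _ h.2).1

theorem ucEquiv_iff {P Q : List Step} (hP : InE P) (hQ : InE Q) :
    UCEquiv P Q ↔ ∀ i k, UCAt P i k ↔ UCAt Q i k := by
  refine ⟨fun h i k => ?_, fun h k _ i => h i k⟩
  by_cases hk : 2 ≤ k
  · exact h k hk i
  · exact iff_of_false (fun h' => hk (two_le_of_ucAt hP h')) (fun h' => hk (two_le_of_ucAt hQ h'))

theorem nClasses_UCEquiv_eq_card (n : ℕ) :
    nClasses UCEquiv n =
      Nat.card {x : List (ℕ × ℕ) × ℕ // Admissible x.1 x.2 ∧ profileLength x.1 x.2 = n} := by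
  let r (P Q : {P : List Step // InE P ∧ P.length = n}) : Prop := UCEquiv P.1 Q.1
  have hr : Equivalence r := ⟨fun _ _ _ _ => Iff.rfl, fun h k hk i => (h k hk i).symm,
    fun h h' k hk i => (h k hk i).trans (h' k hk i)⟩
  let f (x : {x : List (ℕ × ℕ) × ℕ // Admissible x.1 x.2 ∧ profileLength x.1 x.2 = n}) : Quot r :=
    Quot.mk r ⟨profilePath x.1.1 x.1.2, inE_profilePath x.2.1,
      by rw [length_profilePath x.2.1, x.2.2]⟩
  refine (Nat.card_eq_of_bijective f ⟨fun x y hxy => ?_, fun q => ?_⟩).symm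
  · have hpat := (ucEquiv_iff (inE_profilePath x.2.1) (inE_profilePath y.2.1)).1
      (hr.eqvGen_iff.1 (Quot.eqvGen_exact hxy))
    obtain ⟨hd, ht⟩ := eq_of_ucAt_profilePath_iff x.2.1 y.2.1 (x.2.2.trans y.2.2.symm) hpat
    exact Subtype.ext (Prod.ext hd ht)
  · obtain ⟨⟨P, hP, rfl⟩⟩ := q
    obtain ⟨d, t, hx, hlen, hpat⟩ := exists_profile (inE_iff_isSegment.1 hP)
    refine ⟨⟨(d, t), hx, hlen⟩, Quot.sound ?_⟩
    exact (ucEquiv_iff (inE_profilePath hx) hP).2 fun i k => (hpat i k).symm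

open Finset

def blocks (n : ℕ) : Finset (ℕ × ℕ) :=
  (range n ×ˢ range n).filter fun p => 1 ≤ p.2 ∧ Feasible p.1 p.2 ∧ p.1 + 2 ≤ n

def profiles (n : ℕ) : Finset (List (ℕ × ℕ) × ℕ) :=
  (if Feasible n 0 then {([], n)} else ∅) ∪
    (blocks n).attach.biUnion fun p =>
      (profiles (n - (p.1.1 + 2))).image fun x => (p.1 :: x.1, x.2)
termination_by n
decreasing_by have := (mem_filter.1 p.2).2.2.2; omega

theorem mem_profiles {n : ℕ} {x : List (ℕ × ℕ) × ℕ} :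
    x ∈ profiles n ↔ Admissible x.1 x.2 ∧ profileLength x.1 x.2 = n := by
  induction n using Nat.strong_induction_on generalizing x with
  | _ n ih =>
  obtain ⟨d, t⟩ := x
  have hite (x : List (ℕ × ℕ) × ℕ) :
      x ∈ (if Feasible n 0 then {([], n)} else ∅ : Finset _) ↔ Feasible n 0 ∧ x = ([], n) := by
    split_ifs <;> simp [*]
  rw [profiles, mem_union, hite]
  cases d with
  | nil =>
    simp only [mem_biUnion, mem_image, Prod.mk.injEq, List.cons_ne_nil, false_and, and_false,
      exists_false, or_false, true_and, Admissible, List.not_mem_nil, IsEmpty.forall_iff,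
      implies_true, profileLength, List.map_nil, List.sum_nil, zero_add]
    constructor <;> rintro ⟨h, rfl⟩ <;> exact ⟨h, rfl⟩
  | cons p d =>
    obtain ⟨L, h⟩ := p
    simp only [mem_biUnion, mem_image, mem_attach, true_and, Subtype.exists, blocks, mem_filter,
      mem_product, mem_range, Prod.mk.injEq, List.cons.injEq, reduceCtorEq,
      admissible_cons, profileLength_cons]
    constructor
    · rintro (⟨-, ⟨⟩, -⟩ | ⟨⟨L', h'⟩, ⟨-, hh, hLh, hL2⟩, y, hy, ⟨⟨⟩, rfl⟩, rfl⟩)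
      rw [ih _ (by omega)] at hy
      exact ⟨⟨⟨hh, hLh⟩, hy.1⟩, by omega⟩
    · rintro ⟨⟨⟨hh, hLh⟩, hd⟩, hlen⟩
      refine Or.inr ⟨(L, h), ⟨⟨by omega, by have := hLh.1; omega⟩, hh, hLh, by omega⟩, (d, t),
        (ih _ (by omega)).2 ⟨hd, show profileLength d t = n - (L + 2) by omega⟩, ⟨rfl, rfl⟩, rfl⟩

theorem card_profiles (n : ℕ) :
    #(profiles n) =
      (if Feasible n 0 then 1 else 0) + ∑ p ∈ blocks n, #(profiles (n - (p.1 + 2))) := by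
  have hcons (p : ℕ × ℕ) : Function.Injective fun x : List (ℕ × ℕ) × ℕ => (p :: x.1, x.2) :=
    fun x y hxy => by simpa [Prod.ext_iff] using hxy
  rw [profiles, card_union_of_disjoint, card_biUnion, ← sum_attach (blocks n)]
  · congr 1
    · split_ifs <;> rfl
    · exact sum_congr rfl fun p _ => card_image_of_injective _ (hcons p)
  · intro p _ q _ hpq
    simp only [Function.onFun, disjoint_left, mem_image]
    rintro _ ⟨x, -, rfl⟩ ⟨y, -, hxy⟩
    exact hpq (Subtype.ext (List.cons.inj (Prod.mk.inj hxy).1).1.symm)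
  · rw [disjoint_left]
    split_ifs <;> simp

def pairSum (f : ℕ → ℕ) (M : ℕ) : ℕ :=
  ∑ i ∈ range M, ∑ u ∈ range (i + 1) with (i - u) % 2 = 0, f u

theorem pairSum_add_three (f : ℕ → ℕ) (M : ℕ) :
    pairSum f (M + 3) + pairSum f M = pairSum f (M + 2) + pairSum f (M + 1) + f (M + 2) := by
  have hstep : ∑ u ∈ range (M + 3) with (M + 2 - u) % 2 = 0, f u =
      ∑ u ∈ range (M + 1) with (M - u) % 2 = 0, f u + f (M + 2) := by
    rw [sum_filter, sum_filter, sum_range_succ, sum_range_succ]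
    simp only [Nat.sub_self, Nat.zero_mod, if_true, (by omega : (M + 2 - (M + 1)) % 2 = 1),
      one_ne_zero, if_false, add_zero]
    congr 1
    refine sum_congr rfl fun u hu => ?_
    rw [(by simp at hu; omega : (M + 2 - u) % 2 = (M - u) % 2)]
  simp only [pairSum, sum_range_succ, hstep]
  ring

theorem sum_blocks_shift (f : ℕ → ℕ) (n s : ℕ) :
    ∑ p ∈ range n ×ˢ range n with 1 ≤ p.2 ∧ p.2 + s ≤ p.1 ∧ (p.1 - p.2 - s) % 2 = 0 ∧ p.1 + 2 ≤ n,
      f (n - (p.1 + 2)) = pairSum f (n - (s + 2)) := by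
  rw [pairSum, sum_sigma']
  apply sum_nbij' (fun p => ⟨n - (s + 2) - p.2, n - (p.1 + 2)⟩)
    (fun x => (n - (x.2 + 2), n - (s + 2) - x.1))
  all_goals intro x hx
  all_goals simp only [mem_filter, mem_product, mem_range, mem_sigma] at hx ⊢
  · omega
  · omega
  · ext <;> simp only <;> omega
  · obtain ⟨i, u⟩ := x
    simp only at hx
    rw [Sigma.mk.injEq]
    dsimp only
    exact ⟨by omega, heq_of_eq (by omega)⟩

theorem sum_blocks (f : ℕ → ℕ) (n : ℕ) :
    ∑ p ∈ blocks n, f (n - (p.1 + 2)) = pairSum f (n - 2) + pairSum f (n - 7) := by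
  rw [← sum_filter_add_sum_filter_not (blocks n) fun p => (p.1 - p.2) % 2 = 0,
    ← sum_blocks_shift f n 0, ← sum_blocks_shift f n 5, blocks, filter_filter, filter_filter]
  congr 1 <;> refine sum_congr (filter_congr fun p _ => ?_) fun _ _ => rfl <;>
    simp only [Feasible] <;> omega

theorem nClasses_UCEquiv_eq_card_profiles (n : ℕ) : nClasses UCEquiv n = #(profiles n) := by
  rw [nClasses_UCEquiv_eq_card, ← Nat.card_eq_finsetCard]
  exact Nat.card_congr (Equiv.subtypeEquivRight fun _ => mem_profiles.symm)

theorem nClasses_UCEquiv_eq (n : ℕ) :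
    nClasses UCEquiv n = (if Feasible n 0 then 1 else 0) +
      pairSum (nClasses UCEquiv) (n - 2) + pairSum (nClasses UCEquiv) (n - 7) := by
  rw [nClasses_UCEquiv_eq_card_profiles, card_profiles]
  simp only [← nClasses_UCEquiv_eq_card_profiles]
  rw [sum_blocks, add_assoc]

theorem nClasses_UCEquiv_values :
    nClasses UCEquiv 0 = 1 ∧ nClasses UCEquiv 1 = 0 ∧ nClasses UCEquiv 2 = 1 ∧
      nClasses UCEquiv 3 = 1 ∧ nClasses UCEquiv 4 = 2 ∧ nClasses UCEquiv 5 = 4 ∧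
      nClasses UCEquiv 6 = 5 ∧ nClasses UCEquiv 7 = 9 ∧ nClasses UCEquiv 8 = 15 ∧
      nClasses UCEquiv 9 = 24 := by
  have h := nClasses_UCEquiv_eq
  have h0 : nClasses UCEquiv 0 = 1 := by simpa [pairSum, Feasible] using h 0
  have h1 : nClasses UCEquiv 1 = 0 := by simpa [pairSum, Feasible] using h 1
  have h2 : nClasses UCEquiv 2 = 1 := by simpa [pairSum, Feasible] using h 2
  have h3 : nClasses UCEquiv 3 = 1 := by
    simpa [pairSum, Feasible, sum_range_succ, sum_filter, h0] using h 3
  have h4 : nClasses UCEquiv 4 = 2 := by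
    simpa [pairSum, Feasible, sum_range_succ, sum_filter, h0, h1] using h 4
  have h5 : nClasses UCEquiv 5 = 4 := by
    simpa [pairSum, Feasible, sum_range_succ, sum_filter, h0, h1, h2] using h 5
  have h6 : nClasses UCEquiv 6 = 5 := by
    simpa [pairSum, Feasible, sum_range_succ, sum_filter, h0, h1, h2, h3] using h 6
  have h7 : nClasses UCEquiv 7 = 9 := by
    simpa [pairSum, Feasible, sum_range_succ, sum_filter, h0, h1, h2, h3, h4] using h 7
  have h8 : nClasses UCEquiv 8 = 15 := by
    simpa [pairSum, Feasible, sum_range_succ, sum_filter, h0, h1, h2, h3, h4, h5] using h 8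
  have h9 : nClasses UCEquiv 9 = 24 := by
    simpa [pairSum, Feasible, sum_range_succ, sum_filter, h0, h1, h2, h3, h4, h5, h6] using h 9
  exact ⟨h0, h1, h2, h3, h4, h5, h6, h7, h8, h9⟩

theorem nClasses_UCEquiv_add_ten (m : ℕ) :
    nClasses UCEquiv (m + 10) =
      nClasses UCEquiv (m + 9) + nClasses UCEquiv (m + 8) + nClasses UCEquiv (m + 2) := by
  have e₇ := nClasses_UCEquiv_eq (m + 7)
  have e₈ := nClasses_UCEquiv_eq (m + 8)
  have e₉ := nClasses_UCEquiv_eq (m + 9)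
  have e₁₀ := nClasses_UCEquiv_eq (m + 10)
  simp only [Feasible, Nat.reduceSubDiff, Nat.add_sub_cancel] at e₇ e₈ e₉ e₁₀
  rw [if_pos (by omega)] at e₇ e₈ e₉ e₁₀
  have s₁ := pairSum_add_three (nClasses UCEquiv) (m + 5)
  have s₂ := pairSum_add_three (nClasses UCEquiv) m
  simp only [Nat.add_assoc, Nat.reduceAdd] at s₁ s₂
  omega

theorem nClasses_UCEquiv_recurrence : ∀ m : ℕ,
    nClasses UCEquiv (m + 7) + nClasses UCEquiv (m + 5) + nClasses UCEquiv (m + 3) +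
        nClasses UCEquiv (m + 1) =
      2 * nClasses UCEquiv (m + 6) + nClasses UCEquiv (m + 4) + nClasses UCEquiv (m + 2) +
        nClasses UCEquiv m
  | 0 | 1 | 2 => by
    obtain ⟨h0, h1, h2, h3, h4, h5, h6, h7, h8, h9⟩ := nClasses_UCEquiv_values
    simp only [Nat.reduceAdd, h0, h1, h2, h3, h4, h5, h6, h7, h8, h9]
  | m + 3 => by
    -- an order-8 step turns the defect at `m + 2` into minus the defect at `m + 3`
    have h := nClasses_UCEquiv_recurrence (m + 2)
    have h8 := nClasses_UCEquiv_add_ten m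
    simp only [Nat.add_assoc, Nat.reduceAdd] at h ⊢
    omega

/-- The number `i n` of UC-equivalence classes of paths of length `n` in ℰ
satisfies `i 0 = 1`, `i 1 = 0`, `i 2 = 1`, `i 3 = 1`, `i 4 = 2`, `i 5 = 4`,
`i 6 = 5` and `i n = 2 i(n-1) - i(n-2) + i(n-3) - i(n-4) + i(n-5) - i(n-6) + i(n-7)`
for `n ≥ 7`. -/
theorem count_UCEquiv_classes :
    nClasses UCEquiv 0 = 1 ∧ nClasses UCEquiv 1 = 0 ∧ nClasses UCEquiv 2 = 1 ∧
    nClasses UCEquiv 3 = 1 ∧ nClasses UCEquiv 4 = 2 ∧ nClasses UCEquiv 5 = 4 ∧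
    nClasses UCEquiv 6 = 5 ∧
    ∀ n, 7 ≤ n → (nClasses UCEquiv n : ℤ) =
      2 * nClasses UCEquiv (n - 1) - nClasses UCEquiv (n - 2) + nClasses UCEquiv (n - 3)
        - nClasses UCEquiv (n - 4) + nClasses UCEquiv (n - 5) - nClasses UCEquiv (n - 6)
        + nClasses UCEquiv (n - 7) := by
  obtain ⟨h0, h1, h2, h3, h4, h5, h6, -⟩ := nClasses_UCEquiv_values
  refine ⟨h0, h1, h2, h3, h4, h5, h6, fun n hn => ?_⟩
  obtain ⟨m, rfl⟩ := Nat.exists_eq_add_of_le' hn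
  have h := nClasses_UCEquiv_recurrence m
  simp only [Nat.reduceSubDiff, Nat.add_sub_cancel]
  omega
end

section
/- Let 𝒥_1 be the set of paths of length n ≥ 0 with n ≠ 1 given by (UD)^{n/2} if n is even, and (UD)^{(n−3)/2}UUC_2 if n is odd (n ≥ 3). Let 𝒥 be the union of 𝒥_1 with the set of paths of the form α_1U^{k_1+1}DC_{k_1}α_2U^{k_2+1}DC_{k_2}⋯α_rU^{k_r+1}DC_{k_r}α_{r+1} where r ≥ 1, k_i ≥ 2 for 1 ≤ i ≤ r, and all α_i are in 𝒥_1. Then for every path P ∈ ℰ there exists exactly one path Q ∈ 𝒥 with |Q| = |P| such that P and Q are DC-equivalent. In other words, 𝒥 is a complete set of representatives of the DC-equivalence classes of ℰ. -/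
/-- Two paths are `DC`-equivalent when, for every `k ≥ 2`, the occurrences of
the pattern `D C_k` appear at the same positions in both paths. -/
def DCEquiv (P Q : List Step) : Prop :=
  ∀ k, 2 ≤ k → ∀ i : ℕ,
    (P[i]? = some Step.D ∧ P[i + 1]? = some (Step.C k)) ↔
    (Q[i]? = some Step.D ∧ Q[i + 1]? = some (Step.C k))

/-- Membership in 𝒥₁ : paths `(UD)^{n/2}` for even `n ≥ 0`, and
`(UD)^{(n-3)/2} UU C_2` for odd `n ≥ 3`. -/
def InJ1 (P : List Step) : Prop :=
  (∃ k, P = UDpow k) ∨ (∃ k, P = UDpow k ++ [Step.U, Step.U, Step.C 2])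

/-- Membership in 𝒥 : union of 𝒥₁ with the set of paths of the form
`α_1 U^{k_1+1} D C_{k_1} ⋯ α_r U^{k_r+1} D C_{k_r} α_{r+1}` with `r ≥ 1`,
all `k_i ≥ 2` and all `α_i ∈ 𝒥₁` (the case `r = 0` giving 𝒥₁). -/
def InJ (P : List Step) : Prop :=
  ∃ (L : List (List Step × ℕ)) (b : List Step),
    (∀ t ∈ L, InJ1 t.1 ∧ 2 ≤ t.2) ∧ InJ1 b ∧
    P = (L.map (fun t => t.1 ++ Upow (t.2 + 1) ++ [Step.D, Step.C t.2])).flatten ++ b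


/-!
Record at each position `i` of a path the size `k` of a pattern `D C_k` starting there
(`dcMarks`); two paths of equal length are DC-equivalent iff these mark lists agree.
A block `α U^{k+1} D C_k` with `α ∈ 𝒥₁` contributes `|α| + k + 1` blank marks followed by
`k` and a blank, and a path of `𝒥₁` is determined by its length, so a path of `𝒥` is
determined by its marks. Conversely, the first pattern `D C_k` of a path of `ℰ` starts at
height `k + 1`; the prefix before it has length `k + 1` or at least `k + 3` (a path ending at
height `h` has length `h` or at least `h + 2`), so it can be replaced by `α U^{k+1}` with
`α ∈ 𝒥₁`, and the path after `C_k` is again in `ℰ`, which gives a representative by induction.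
-/

open List

theorem List.ext_of_getElem?_eq_some_some {α : Type*} {l₁ l₂ : List (Option α)}
    (hlen : l₁.length = l₂.length)
    (h : ∀ (i : ℕ) (a : α), l₁[i]? = some (some a) ↔ l₂[i]? = some (some a)) : l₁ = l₂ := by
  refine List.ext_getElem hlen fun i h₁ h₂ => Option.ext fun a => ?_
  simpa [List.getElem?_eq_getElem h₁, List.getElem?_eq_getElem h₂] using h i a

theorem List.replicate_none_append_some_cons_inj {α : Type*} {m n : ℕ} {a b : α}
    {l₁ l₂ : List (Option α)}
    (h : replicate m none ++ some a :: l₁ = replicate n none ++ some b :: l₂) :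
    m = n ∧ a = b ∧ l₁ = l₂ := by
  induction m generalizing n with
  | zero => cases n <;> simp_all [replicate_succ]
  | succ m ih =>
    cases n with
    | zero => simp [replicate_succ] at h
    | succ n => simpa using ih (by simpa [replicate_succ] using h)

def dcMark : Step → Option Step → Option ℕ
  | .D, some (.C k) => if 2 ≤ k then some k else none
  | _, _ => none

def dcMarks : List Step → List (Option ℕ)
  | [] => []
  | s :: t => dcMark s t.head? :: dcMarks t

@[simp] lemma dcMark_none (s : Step) : dcMark s none = none := by cases s <;> rfl
@[simp] lemma dcMark_some_U (s : Step) : dcMark s (some .U) = none := by cases s <;> rfl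
@[simp] lemma dcMark_some_D (s : Step) : dcMark s (some .D) = none := by cases s <;> rfl
@[simp] lemma dcMark_U (t : Option Step) : dcMark .U t = none := rfl
@[simp] lemma dcMark_C (k : ℕ) (t : Option Step) : dcMark (.C k) t = none := rfl

lemma dcMark_eq_some {s : Step} {t : Option Step} {k : ℕ} :
    dcMark s t = some k ↔ 2 ≤ k ∧ s = .D ∧ t = some (.C k) := by
  rcases s with _ | _ | _ <;> rcases t with _ | (_ | _ | l) <;> simp [dcMark]
  rintro rfl; rfl

@[simp] lemma length_dcMarks (P : List Step) : (dcMarks P).length = P.length := by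
  induction P <;> simp_all [dcMarks]

lemma getElem?_dcMarks_eq_some_some {P : List Step} {i k : ℕ} :
    (dcMarks P)[i]? = some (some k) ↔ 2 ≤ k ∧ P[i]? = some .D ∧ P[i + 1]? = some (.C k) := by
  induction P generalizing i with
  | nil => simp [dcMarks]
  | cons s t ih =>
    cases i with
    | zero => simp [dcMarks, dcMark_eq_some, List.head?_eq_getElem?]
    | succ i => simpa [dcMarks] using ih

theorem dcMarks_eq_dcMarks_iff {P Q : List Step} :
    dcMarks P = dcMarks Q ↔ Q.length = P.length ∧ DCEquiv P Q := by
  constructor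
  · intro h
    refine ⟨by simpa using congrArg List.length h.symm, fun k hk i => ?_⟩
    simpa [getElem?_dcMarks_eq_some_some, hk] using congrArg (·[i]? = some (some k)) h
  · rintro ⟨hlen, hPQ⟩
    refine List.ext_of_getElem?_eq_some_some (by simp [hlen]) fun i k => ?_
    simp only [getElem?_dcMarks_eq_some_some]
    by_cases hk : 2 ≤ k
    · simp only [hk, true_and, hPQ k hk i]
    · simp only [hk, false_and]

lemma dcMarks_append {A B : List Step} (h : ∀ a ∈ A.getLast?, dcMark a B.head? = none) :
    dcMarks (A ++ B) = dcMarks A ++ dcMarks B := by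
  induction A with
  | nil => rfl
  | cons a A ih =>
    cases A with
    | nil => simpa [dcMarks] using h
    | cons a' A => simpa [dcMarks] using ih (by simpa using h)

@[simp] lemma dcMarks_Upow (n : ℕ) : dcMarks (Upow n) = replicate n none := by
  induction n <;> simp_all [Upow, replicate_succ, dcMarks]

lemma dcMarks_UDpow (n : ℕ) : dcMarks (UDpow n) = replicate (2 * n) none := by
  induction n with
  | zero => rfl
  | succ n ih =>
    have hhead : (UDpow n).head? = none ∨ (UDpow n).head? = some .U := by
      cases n <;> simp [UDpow, replicate_succ]
    rw [show UDpow (n + 1) = .U :: .D :: UDpow n by simp [UDpow, replicate_succ]]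
    rcases hhead with h | h <;> simp [dcMarks, h, ih, Nat.mul_succ, replicate_succ]

lemma dcMarks_append_D_C (A : List Step) {k : ℕ} (hk : 2 ≤ k) (S : List Step) :
    dcMarks (A ++ .D :: .C k :: S) = dcMarks A ++ some k :: none :: dcMarks S := by
  rw [dcMarks_append (by simp)]
  simp [dcMarks, dcMark, hk]

lemma dcMarks_block_append (α : List Step) {k : ℕ} (hk : 2 ≤ k) (R : List Step) :
    dcMarks (α ++ Upow (k + 1) ++ [.D, .C k] ++ R) =
      dcMarks α ++ replicate (k + 1) none ++ some k :: none :: dcMarks R := by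
  rw [show α ++ Upow (k + 1) ++ [.D, .C k] ++ R = α ++ Upow (k + 1) ++ .D :: .C k :: R by simp,
    dcMarks_append_D_C _ hk, dcMarks_append (by simp [Upow, head?_replicate]), dcMarks_Upow]

lemma dcMarks_block_append_ne_replicate (α : List Step) {k : ℕ} (hk : 2 ≤ k) (R : List Step)
    (m : ℕ) : dcMarks (α ++ Upow (k + 1) ++ [.D, .C k] ++ R) ≠ replicate m none := fun h => by
  have hmem : some k ∈ dcMarks (α ++ Upow (k + 1) ++ [.D, .C k] ++ R) := by
    rw [dcMarks_block_append α hk]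
    simp
  rw [h] at hmem
  simp at hmem

lemma dcMarks_eq_replicate_or_exists (P : List Step) :
    dcMarks P = replicate P.length none ∨
      ∃ A k S, 2 ≤ k ∧ P = A ++ .D :: .C k :: S ∧ dcMarks A = replicate A.length none := by
  induction P with
  | nil => exact Or.inl rfl
  | cons s t ih =>
    cases hst : dcMark s t.head? with
    | some k =>
      obtain ⟨hk, rfl, ht⟩ := dcMark_eq_some.mp hst
      obtain ⟨S, rfl⟩ : ∃ S, t = .C k :: S := by
        cases t <;> simp_all
      exact Or.inr ⟨[], k, S, hk, rfl, rfl⟩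
    | none =>
      rcases ih with ht | ⟨A, k, S, hk, rfl, hA⟩
      · exact Or.inl (by simp [dcMarks, hst, ht, replicate_succ])
      · refine Or.inr ⟨s :: A, k, S, hk, rfl, ?_⟩
        cases A <;> simp_all [dcMarks, replicate_succ]

lemma hgt_append (A B : List Step) (i : ℕ) :
    hgt (A ++ B) i = hgt A i + hgt B (i - A.length) := by
  simp [hgt, List.take_append]

lemma hgt_of_length_le {A : List Step} {i : ℕ} (h : A.length ≤ i) :
    hgt A i = (A.map Step.val).sum := by
  simp [hgt, List.take_of_length_le h]

lemma hgt_append_length_add (A B : List Step) (i : ℕ) :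
    hgt (A ++ B) (A.length + i) = (A.map Step.val).sum + hgt B i := by
  rw [hgt_append, hgt_of_length_le (by omega), Nat.add_sub_cancel_left]

lemma hgt_Upow (n i : ℕ) : hgt (Upow n) i = min i n := by
  simp [hgt, Upow, take_replicate, Step.val]

lemma sum_map_val_le_length (l : List Step) : (l.map Step.val).sum ≤ l.length := by
  induction l with
  | nil => simp
  | cons s t ih =>
    have : s.val ≤ 1 := by cases s <;> simp [Step.val]
    simp only [map_cons, sum_cons, length_cons]
    push_cast
    omega

/-- Every step other than `U` falls at least two units short of the rise `1` of `U`. -/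
lemma sum_map_val_add_one_ne_length {l : List Step} (hl : Step.C 0 ∉ l) :
    (l.map Step.val).sum + 1 ≠ l.length := by
  induction l with
  | nil => simp
  | cons s t ih =>
    have ht := sum_map_val_le_length t
    have ih := ih fun h => hl (mem_cons_of_mem _ h)
    simp only [map_cons, sum_cons, length_cons]
    push_cast
    rcases s with _ | _ | _ | k <;> simp_all [Step.val] <;> omega

namespace InE

lemma two_le_of_C_mem {P : List Step} (hP : InE P) {k : ℕ} (h : Step.C k ∈ P) : 2 ≤ k := by
  obtain ⟨i, hi⟩ := mem_iff_getElem?.mp h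
  exact (hP.2.2 i k hi).1

lemma length_ne_one {P : List Step} (hP : InE P) : P.length ≠ 1 := by
  have h := sum_map_val_add_one_ne_length fun h => absurd (hP.two_le_of_C_mem h) (by omega)
  rw [← hgt_of_length_le le_rfl, hP.2.1] at h
  omega

lemma append {A B : List Step} (hA : InE A) (hB : InE B) : InE (A ++ B) := by
  have hA0 : (A.map Step.val).sum = 0 := by rw [← hgt_of_length_le le_rfl, hA.2.1]
  refine ⟨fun i => ?_, ?_, fun i k h => ?_⟩
  · rw [hgt_append]
    rcases le_or_gt i A.length with h | h
    · rw [Nat.sub_eq_zero_of_le h]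
      simpa [hgt] using hA.1 i
    · rw [hgt_of_length_le h.le, hA0, zero_add]
      exact hB.1 _
  · rw [length_append, hgt_append_length_add, hA0, hB.2.1]
    rfl
  · rw [getElem?_append] at h
    split_ifs at h with hi
    · obtain ⟨hk, hh⟩ := hA.2.2 i k h
      refine ⟨hk, ?_⟩
      rw [hgt_append, Nat.sub_eq_zero_of_le hi.le, hh]
      simp [hgt]
    · obtain ⟨hk, hh⟩ := hB.2.2 _ k h
      refine ⟨hk, ?_⟩
      rw [hgt_append, hgt_of_length_le (by omega), hA0, hh, zero_add]

lemma of_append {A B : List Step} (h : InE (A ++ B)) (hA : (A.map Step.val).sum = 0) :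
    InE B := by
  refine ⟨fun i => ?_, ?_, fun i k hi => ?_⟩
  · simpa [hgt_append_length_add, hA] using h.1 (A.length + i)
  · simpa [hgt_append_length_add, hA] using h.2.1
  · obtain ⟨hk, hh⟩ := h.2.2 (A.length + i) k (by simpa [getElem?_append_right] using hi)
    exact ⟨hk, by simpa [hgt_append_length_add, hA] using hh⟩

lemma sum_eq_and_of_append_D_C {A S : List Step} {k : ℕ} (hP : InE (A ++ .D :: .C k :: S)) :
    (A.map Step.val).sum = k + 1 ∧ InE S := by
  have hC : (A ++ .D :: .C k :: S)[A.length + 1]? = some (.C k) := by simp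
  have hh := (hP.2.2 _ _ hC).2
  rw [hgt_append_length_add] at hh
  have hA : (A.map Step.val).sum = k + 1 := by
    simp [hgt, Step.val] at hh
    omega
  have hP' : InE (A ++ [.D, .C k] ++ S) := by simpa using hP
  exact ⟨hA, hP'.of_append (by simp [Step.val, hA])⟩

end InE

lemma inE_UD : InE [.U, .D] := by
  refine ⟨fun i => ?_, by simp [hgt, Step.val], fun i k h => ?_⟩
  · rcases i with _ | _ | i <;> simp [hgt, Step.val]
  · rcases i with _ | _ | i <;> simp at h

lemma inE_UUC2 : InE [.U, .U, .C 2] := by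
  refine ⟨fun i => ?_, by simp [hgt, Step.val], fun i k h => ?_⟩
  · rcases i with _ | _ | _ | i <;> simp [hgt, Step.val]
  · rcases i with _ | _ | _ | i <;> simp at h
    subst h
    simp [hgt, Step.val]

@[simp] lemma length_UDpow (n : ℕ) : (UDpow n).length = 2 * n := by
  simp [UDpow, mul_comm]

lemma inE_UDpow (n : ℕ) : InE (UDpow n) := by
  induction n with
  | zero => exact ⟨fun i => by simp [hgt, UDpow], by simp [hgt, UDpow], by simp [UDpow]⟩
  | succ n ih =>
    rw [show UDpow (n + 1) = [.U, .D] ++ UDpow n by simp [UDpow, replicate_succ]]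
    exact inE_UD.append ih

lemma inE_Upow_append_D_C {k : ℕ} (hk : 2 ≤ k) : InE (Upow (k + 1) ++ [.D, .C k]) := by
  have hDC : ∀ j, hgt [.D, .C k] j = if j = 0 then 0 else if j = 1 then -1 else -1 - (k : ℤ) := by
    rintro (_ | _ | j) <;> simp [hgt, Step.val]
    ring
  have hlen : (Upow (k + 1)).length = k + 1 := by simp [Upow]
  refine ⟨fun i => ?_, ?_, fun i l h => ?_⟩
  · rw [hgt_append, hgt_Upow, hlen, hDC]
    split_ifs <;> omega
  · rw [length_append, hgt_append, hgt_Upow, hlen, hDC]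
    simp only [length_cons, length_nil]
    split_ifs <;> omega
  · have hi : i = k + 2 ∧ l = k := by
      rw [getElem?_append] at h
      split_ifs at h with h₁
      · simp [Upow, getElem?_replicate] at h
      · rcases hj : i - (Upow (k + 1)).length with _ | _ | j <;> simp [hj] at h
        exact ⟨by omega, h.symm⟩
    obtain ⟨rfl, rfl⟩ := hi
    refine ⟨hk, ?_⟩
    rw [hgt_append, hgt_Upow, hlen, hDC]
    split_ifs <;> omega

namespace InJ1

lemma inE {α : List Step} (h : InJ1 α) : InE α := by
  rcases h with ⟨n, rfl⟩ | ⟨n, rfl⟩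
  · exact inE_UDpow n
  · exact (inE_UDpow n).append inE_UUC2

lemma dcMarks_eq {α : List Step} (h : InJ1 α) : dcMarks α = replicate α.length none := by
  rcases h with ⟨n, rfl⟩ | ⟨n, rfl⟩
  · simp [dcMarks_UDpow, length_UDpow]
  · rw [dcMarks_append (by simp), dcMarks_UDpow]
    simp [dcMarks, replicate_add]

lemma eq_of_length_eq {α β : List Step} (hα : InJ1 α) (hβ : InJ1 β)
    (h : α.length = β.length) : α = β := by
  rcases hα with ⟨m, rfl⟩ | ⟨m, rfl⟩ <;> rcases hβ with ⟨n, rfl⟩ | ⟨n, rfl⟩ <;>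
    simp at h <;> first | omega | rw [h]

lemma inJ {α : List Step} (h : InJ1 α) : InJ α := ⟨[], α, by simp, h, by simp⟩

end InJ1

def j1Path (n : ℕ) : List Step :=
  if n % 2 = 0 then UDpow (n / 2) else UDpow ((n - 3) / 2) ++ [.U, .U, .C 2]

lemma inJ1_j1Path (n : ℕ) : InJ1 (j1Path n) := by
  unfold j1Path
  split
  · exact Or.inl ⟨_, rfl⟩
  · exact Or.inr ⟨_, rfl⟩

lemma length_j1Path {n : ℕ} (h : n ≠ 1) : (j1Path n).length = n := by
  unfold j1Path
  split_ifs <;> simp <;> omega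

namespace InJ

lemma block_append {α R : List Step} {k : ℕ} (hα : InJ1 α) (hk : 2 ≤ k) (hR : InJ R) :
    InJ (α ++ Upow (k + 1) ++ [.D, .C k] ++ R) := by
  obtain ⟨L, b, hL, hb, rfl⟩ := hR
  exact ⟨(α, k) :: L, b, forall_mem_cons.mpr ⟨⟨hα, hk⟩, hL⟩, hb, by simp⟩

lemma inJ1_or_block_append {Q : List Step} (hQ : InJ Q) :
    InJ1 Q ∨ ∃ α k R, InJ1 α ∧ 2 ≤ k ∧ InJ R ∧ Q = α ++ Upow (k + 1) ++ [.D, .C k] ++ R := by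
  obtain ⟨L, b, hL, hb, rfl⟩ := hQ
  cases L with
  | nil => exact Or.inl (by simpa using hb)
  | cons t L =>
    obtain ⟨⟨hα, hk⟩, hL⟩ := forall_mem_cons.mp hL
    exact Or.inr ⟨t.1, t.2, _, hα, hk, ⟨L, b, hL, hb, rfl⟩, by simp⟩

lemma eq_of_dcMarks_eq {Q R : List Step} (hQ : InJ Q) (hR : InJ R)
    (h : dcMarks Q = dcMarks R) : Q = R := by
  induction hn : Q.length using Nat.strong_induction_on generalizing Q R with
  | _ n ih =>
  rcases hQ.inJ1_or_block_append with hQ | ⟨α, k, Q', hα, hk, hQ', rfl⟩ <;>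
    rcases hR.inJ1_or_block_append with hR | ⟨β, l, R', hβ, hl, hR', rfl⟩
  · exact hQ.eq_of_length_eq hR (by simpa using congrArg length h)
  · exact absurd (hQ.dcMarks_eq ▸ h).symm (dcMarks_block_append_ne_replicate _ hl _ _)
  · exact absurd (hR.dcMarks_eq ▸ h) (dcMarks_block_append_ne_replicate _ hk _ _)
  · rw [dcMarks_block_append _ hk, dcMarks_block_append _ hl, hα.dcMarks_eq, hβ.dcMarks_eq,
      ← replicate_add, ← replicate_add] at h
    obtain ⟨hlen, rfl, hrest⟩ := replicate_none_append_some_cons_inj h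
    obtain rfl := hα.eq_of_length_eq hβ (by omega)
    rw [ih Q'.length (by simp [← hn]; omega) hQ' hR' (by simpa using hrest) rfl]

end InJ

lemma InE.exists_inJ_dcMarks_eq {P : List Step} (hP : InE P) :
    ∃ Q, InE Q ∧ InJ Q ∧ dcMarks Q = dcMarks P := by
  induction hn : P.length using Nat.strong_induction_on generalizing P with
  | _ n ih =>
  rcases dcMarks_eq_replicate_or_exists P with hP0 | ⟨A, k, S, hk, rfl, hA⟩
  · have hj := inJ1_j1Path P.length
    exact ⟨_, hj.inE, hj.inJ, by rw [hj.dcMarks_eq, hP0, length_j1Path hP.length_ne_one]⟩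
  · obtain ⟨hAk, hS⟩ := hP.sum_eq_and_of_append_D_C
    obtain ⟨Q', hQ'E, hQ'J, hQ'⟩ := ih S.length (by simp [← hn]; omega) hS rfl
    have hC0 : Step.C 0 ∉ A := fun h => by
      have := hP.two_le_of_C_mem (mem_append_left _ h)
      omega
    have hle := sum_map_val_le_length A
    have hne := sum_map_val_add_one_ne_length hC0
    set m := A.length - (k + 1)
    have hm : m ≠ 1 := by omega
    have hj := inJ1_j1Path m
    refine ⟨j1Path m ++ Upow (k + 1) ++ [.D, .C k] ++ Q', ?_, InJ.block_append hj hk hQ'J, ?_⟩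
    · simpa only [append_assoc] using (hj.inE.append (inE_Upow_append_D_C hk)).append hQ'E
    · rw [dcMarks_block_append _ hk, dcMarks_append_D_C _ hk, hj.dcMarks_eq, hA, hQ',
        length_j1Path hm, ← replicate_add, show m + (k + 1) = A.length by omega]

/-- 𝒥 is a complete set of representatives of the DC-equivalence classes of ℰ. -/
theorem J_complete_set_of_representatives_for_DCEquiv (P : List Step) (hP : InE P) :
    ∃! Q : List Step, (InE Q ∧ InJ Q) ∧ Q.length = P.length ∧ DCEquiv P Q := by
  obtain ⟨Q, hQE, hQJ, hQP⟩ := hP.exists_inJ_dcMarks_eq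
  refine ⟨Q, ⟨⟨hQE, hQJ⟩, dcMarks_eq_dcMarks_iff.mp hQP.symm⟩, ?_⟩
  rintro R ⟨⟨-, hRJ⟩, hRP⟩
  exact hRJ.eq_of_dcMarks_eq hQJ ((dcMarks_eq_dcMarks_iff.mpr hRP).symm.trans hQP.symm)
end

section
/- Let ℓ_n denote the number of DU-equivalence classes of paths of length n in ℰ. Then ℓ_0 = 1, ℓ_1 = 0, ℓ_2 = 1, and ℓ_n = ℓ_{n−1} + ℓ_{n−2} for all n ≥ 3. -/
/-- Two paths are `DU`-equivalent when the occurrences of the pattern `DU`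
appear at the same positions in both paths. -/
def DUEquiv (P Q : List Step) : Prop :=
  ∀ i : ℕ, (P[i]? = some Step.D ∧ P[i + 1]? = some Step.U) ↔
    (Q[i]? = some Step.D ∧ Q[i + 1]? = some Step.U)

/-!
For paths of the same length, DU-equivalence just says that the sets of DU positions coincide,
so for `n ≥ 2` the classes correspond to the sets of DU positions that occur. In a path of ℰ of
length `n` a DU cannot start at position `0` (the path would go below the axis) nor end at the
last step (the path would have to end at height `1`), and two DUs cannot overlap; so the set lies
in `{1, …, n - 3}` and contains no two consecutive integers. Conversely, every such set `S` is the
DU set of the path that steps down exactly at the positions in `S`, up elsewhere, and returns to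
the axis by one catastrophe (a plain `D` if it is at height `1`). Sparse subsets of `{1, …, m}`
obey the Fibonacci recursion: split on whether `m` belongs to the set.
-/

open Finset

lemma hgt_succ {P : List Step} {i : ℕ} {s : Step} (h : P[i]? = some s) :
    hgt P (i + 1) = hgt P i + s.val := by
  simp [hgt, List.take_add_one, h]

lemma hgt_of_length_le_s17 {P : List Step} {i : ℕ} (h : P.length ≤ i) :
    hgt P i = hgt P P.length := by
  simp [hgt, List.take_of_length_le h]

lemma hgt_append_of_le_length {L M : List Step} {i : ℕ} (h : i ≤ L.length) :
    hgt (L ++ M) i = hgt L i := by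
  simp [hgt, List.take_append_of_le_length h]

lemma InE_nil : InE [] :=
  ⟨fun _ => by simp [hgt], rfl, fun _ _ h => by simp at h⟩

lemma length_ne_one_of_InE {P : List Step} (hP : InE P) : P.length ≠ 1 := by
  intro hl
  obtain ⟨s, rfl⟩ := List.length_eq_one_iff.mp hl
  have hend : s.val = 0 := by simpa [hgt] using hP.2.1
  cases s with
  | U => simp [Step.val] at hend
  | D => simp [Step.val] at hend
  | C k =>
    obtain ⟨hk, h0⟩ := hP.2.2 0 k rfl
    change (0 : ℤ) = k at h0
    omega

lemma InE_append_cfin {L : List Step} {h : ℕ} (hnn : ∀ i ≤ L.length, 0 ≤ hgt L i)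
    (hend : hgt L L.length = h) (h1 : 1 ≤ h) (hL : ∀ k, Step.C k ∉ L) :
    InE (L ++ [cfin h]) := by
  have hval : (cfin h).val = -(h : ℤ) := by
    unfold cfin; split_ifs <;> simp [Step.val, *]
  have htotal : hgt (L ++ [cfin h]) (L ++ [cfin h]).length = 0 := by
    rw [List.length_append, List.length_singleton, hgt_succ List.getElem?_concat_length,
      hgt_append_of_le_length le_rfl, hend, hval, add_neg_cancel]
  refine ⟨fun i => ?_, htotal, fun i k hik => ?_⟩
  · rcases le_or_gt i L.length with hi | hi
    · rw [hgt_append_of_le_length hi]; exact hnn i hi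
    · rw [hgt_of_length_le_s17 (by simpa using hi), htotal]
  · rcases lt_trichotomy i L.length with hi | rfl | hi
    · rw [List.getElem?_append_left hi] at hik
      exact absurd (List.mem_of_getElem? hik) (hL k)
    · have hck : cfin h = Step.C k := by simpa using hik
      unfold cfin at hck
      split_ifs at hck with hh
      cases hck
      rw [hgt_append_of_le_length le_rfl, hend]
      exact ⟨by omega, rfl⟩
    · simp [List.getElem?_eq_none (by simp; omega : (L ++ [cfin h]).length ≤ i)] at hik

def duSet (P : List Step) : Finset ℕ :=
  (range P.length).filter fun i => P[i]? = some .D ∧ P[i + 1]? = some .U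

lemma mem_duSet {P : List Step} {i : ℕ} :
    i ∈ duSet P ↔ P[i]? = some .D ∧ P[i + 1]? = some .U := by
  simp only [duSet, mem_filter, mem_range, and_iff_right_iff_imp]
  exact fun h => (List.getElem?_eq_some_iff.mp h.1).1

lemma duEquiv_iff_duSet_eq {P Q : List Step} : DUEquiv P Q ↔ duSet P = duSet Q := by
  simp only [DUEquiv, Finset.ext_iff, mem_duSet]

def sparseSubsets (m : ℕ) : Finset (Finset ℕ) :=
  (Icc 1 m).powerset.filter fun S => ∀ a ∈ S, a + 1 ∉ S

lemma mem_sparseSubsets {m : ℕ} {S : Finset ℕ} :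
    S ∈ sparseSubsets m ↔ S ⊆ Icc 1 m ∧ ∀ a ∈ S, a + 1 ∉ S := by
  simp [sparseSubsets]

/-- `a ↦ a - 1` maps `S ∩ [0, i)` injectively into the complement of `S` in `[0, i)`. -/
lemma two_mul_card_inter_range_le {S : Finset ℕ} (h0 : 0 ∉ S) (hS : ∀ a ∈ S, a + 1 ∉ S)
    (i : ℕ) : 2 * #(S ∩ range i) ≤ i := by
  set T := S ∩ range i
  have hpos : ∀ a ∈ T, 1 ≤ a := fun a ha => by
    have : a ≠ 0 := fun h => h0 (h ▸ (mem_inter.mp ha).1)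
    omega
  have hinj : Set.InjOn (· - 1) (T : Set ℕ) := fun a ha b hb hab => by
    have := hpos a ha; have := hpos b hb; simp only at hab; omega
  have hdisj : Disjoint T (T.image (· - 1)) := by
    refine disjoint_left.mpr fun a ha ha' => ?_
    obtain ⟨b, hb, rfl⟩ := mem_image.mp ha'
    have := hpos b hb
    exact hS _ (mem_inter.mp ha).1 (by rw [Nat.sub_add_cancel this]; exact (mem_inter.mp hb).1)
  have hsub : T ∪ T.image (· - 1) ⊆ range i := by
    refine union_subset inter_subset_right fun a ha => ?_
    obtain ⟨b, hb, rfl⟩ := mem_image.mp ha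
    have := mem_range.mp (mem_inter.mp hb).2
    exact mem_range.mpr (by omega)
  calc 2 * #T = #(T ∪ T.image (· - 1)) := by
        rw [card_union_of_disjoint hdisj, card_image_of_injOn hinj, two_mul]
    _ ≤ i := by simpa using card_le_card hsub

lemma sparseSubsets_add_two (m : ℕ) : sparseSubsets (m + 2) =
    sparseSubsets (m + 1) ∪ (sparseSubsets m).image (insert (m + 2)) := by
  ext S
  simp only [mem_union, mem_image, mem_sparseSubsets, subset_iff, mem_Icc]
  constructor
  · rintro ⟨hsub, hsp⟩
    by_cases hm : m + 2 ∈ S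
    · refine .inr ⟨S.erase (m + 2), ⟨fun a ha => ?_, fun a ha h => ?_⟩, insert_erase hm⟩
      · have hm1 : m + 1 ∉ S := fun h => hsp _ h hm
        have := hsub (mem_of_mem_erase ha)
        have := ne_of_mem_erase ha
        have : a ≠ m + 1 := fun h => hm1 (h ▸ mem_of_mem_erase ha)
        omega
      · exact hsp a (mem_of_mem_erase ha) (mem_of_mem_erase h)
    · refine .inl ⟨fun a ha => ?_, hsp⟩
      have := hsub ha
      have : a ≠ m + 2 := fun h => hm (h ▸ ha)
      omega
  · rintro (⟨hsub, hsp⟩ | ⟨T, ⟨hsub, hsp⟩, rfl⟩)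
    · exact ⟨fun a ha => by have := hsub ha; omega, hsp⟩
    · refine ⟨fun a ha => ?_, fun a ha h => ?_⟩
      · rcases mem_insert.mp ha with rfl | ha
        · omega
        · have := hsub ha; omega
      · rcases mem_insert.mp ha with rfl | ha <;> rcases mem_insert.mp h with h | h
        · omega
        · have := hsub h; omega
        · have := hsub ha; omega
        · exact hsp a ha h

lemma card_sparseSubsets_add_two (m : ℕ) :
    #(sparseSubsets (m + 2)) = #(sparseSubsets (m + 1)) + #(sparseSubsets m) := by
  have hnot : ∀ T ∈ sparseSubsets m, m + 2 ∉ T := fun T hT h => by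
    have := mem_Icc.mp ((mem_sparseSubsets.mp hT).1 h); omega
  have hdisj : Disjoint (sparseSubsets (m + 1)) ((sparseSubsets m).image (insert (m + 2))) := by
    refine disjoint_left.mpr fun S hS hS' => ?_
    obtain ⟨T, -, rfl⟩ := mem_image.mp hS'
    have := mem_Icc.mp ((mem_sparseSubsets.mp hS).1 (mem_insert_self _ T)); omega
  have hinj : Set.InjOn (insert (m + 2)) (sparseSubsets m : Set (Finset ℕ)) :=
    fun S hS T hT hST => by
      rw [← erase_insert (hnot S hS), hST, erase_insert (hnot T hT)]
  rw [sparseSubsets_add_two, card_union_of_disjoint hdisj, card_image_of_injOn hinj]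

lemma duSet_mem_sparseSubsets {P : List Step} (hP : InE P) :
    duSet P ∈ sparseSubsets (P.length - 3) := by
  refine mem_sparseSubsets.mpr ⟨fun i hi => ?_, fun i hi hi' => ?_⟩
  · obtain ⟨hD, hU⟩ := mem_duSet.mp hi
    have hlt : i + 1 < P.length := (List.getElem?_eq_some_iff.mp hU).1
    have hpos : i ≠ 0 := by
      rintro rfl
      have := hP.1 1
      rw [hgt_succ hD] at this
      simp [hgt, Step.val] at this
    have hlast : i + 2 ≠ P.length := by
      intro hl
      have hend := hP.2.1
      rw [← hl, hgt_succ hU] at hend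
      have := hP.1 (i + 1)
      simp only [Step.val] at hend
      omega
    exact mem_Icc.mpr ⟨by omega, by omega⟩
  · have hU := (mem_duSet.mp hi).2
    have hD := (mem_duSet.mp hi').1
    simp [hU] at hD

def udWord (S : Finset ℕ) (k : ℕ) : List Step :=
  (List.range k).map fun i => if i ∈ S then .D else .U

lemma getElem?_udWord {S : Finset ℕ} {k i : ℕ} (hi : i < k) :
    (udWord S k)[i]? = some (if i ∈ S then .D else .U) := by
  simp [udWord, hi]

lemma length_udWord (S : Finset ℕ) (k : ℕ) : (udWord S k).length = k := by
  simp [udWord]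

lemma C_notMem_udWord (S : Finset ℕ) (k j : ℕ) : Step.C j ∉ udWord S k := by
  simp only [udWord, List.mem_map, not_exists, not_and]
  intro i _
  split_ifs <;> simp

lemma hgt_udWord {S : Finset ℕ} {k i : ℕ} (hi : i ≤ k) :
    hgt (udWord S k) i = i - 2 * #(S ∩ range i) := by
  induction i with
  | zero => simp [hgt]
  | succ i ih =>
    rw [hgt_succ (getElem?_udWord hi), ih (by omega), range_add_one]
    by_cases h : i ∈ S
    · rw [inter_insert_of_mem h, card_insert_of_notMem (by simp)]
      simp only [h, if_true, Step.val]; push_cast; ring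
    · rw [inter_insert_of_notMem h]
      simp only [h, if_false, Step.val]; push_cast; ring

def canonPath (n : ℕ) (S : Finset ℕ) : List Step :=
  udWord S (n - 1) ++ [cfin (n - 1 - 2 * #S)]

lemma length_canonPath {n : ℕ} (hn : 1 ≤ n) (S : Finset ℕ) : (canonPath n S).length = n := by
  rw [canonPath, List.length_append, length_udWord, List.length_singleton]
  omega

lemma InE_canonPath {n : ℕ} {S : Finset ℕ} (hn : 2 ≤ n) (hS : S ∈ sparseSubsets (n - 3)) :
    InE (canonPath n S) := by
  obtain ⟨hsub, hsp⟩ := mem_sparseSubsets.mp hS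
  have h0 : 0 ∉ S := fun h => by have := mem_Icc.mp (hsub h); omega
  have hrange : S ⊆ range (n - 2) := fun a ha => by
    have := mem_Icc.mp (hsub ha); exact mem_range.mpr (by omega)
  have hcard : 2 * #S ≤ n - 2 := by
    simpa [inter_eq_left.mpr hrange] using two_mul_card_inter_range_le h0 hsp (n - 2)
  have hlen := length_udWord S (n - 1)
  refine InE_append_cfin (fun i hi => ?_) ?_ (by omega) (C_notMem_udWord S _)
  · rw [hlen] at hi
    rw [hgt_udWord hi]
    have := two_mul_card_inter_range_le h0 hsp i
    omega
  · rw [hlen, hgt_udWord le_rfl,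
      inter_eq_left.mpr (hrange.trans (range_subset_range.mpr (by omega)))]
    omega

lemma duSet_canonPath {n : ℕ} {S : Finset ℕ} (hn : 2 ≤ n) (hS : S ∈ sparseSubsets (n - 3)) :
    duSet (canonPath n S) = S := by
  obtain ⟨hsub, hsp⟩ := mem_sparseSubsets.mp hS
  have hlast : (canonPath n S)[n - 1]? = some (cfin (n - 1 - 2 * #S)) := by
    rw [canonPath, ← List.getElem?_concat_length, length_udWord]
  have hget : ∀ i < n - 1, (canonPath n S)[i]? = some (if i ∈ S then .D else .U) :=
    fun i hi => by
      rw [canonPath, List.getElem?_append_left (by rwa [length_udWord]), getElem?_udWord hi]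
  ext i
  rw [mem_duSet]
  constructor
  · rintro ⟨hD, hU⟩
    have hi : i + 1 < n - 1 := by
      by_contra! h
      have hlt : i + 1 < n := by
        simpa [length_canonPath (by omega : 1 ≤ n)] using (List.getElem?_eq_some_iff.mp hU).1
      rw [show i + 1 = n - 1 by omega, hlast, cfin] at hU
      split_ifs at hU <;> simp at hU
    rw [hget i (by omega)] at hD
    by_contra h
    simp [h] at hD
  · intro hi
    have := mem_Icc.mp (hsub hi)
    rw [hget i (by omega), hget (i + 1) (by omega)]
    simp [hi, hsp i hi]

lemma Nat.card_quot_eq_card_range {α β : Type*} {r : α → α → Prop} (f : α → β)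
    (hr : ∀ a b, r a b ↔ f a = f b) : Nat.card (Quot r) = Nat.card (Set.range f) := by
  obtain rfl : r = fun a b => f a = f b := by
    funext a b
    exact propext (hr a b)
  exact Nat.card_congr (Setoid.quotientKerEquivRange f)

lemma nClasses_DUEquiv_eq_card_range (n : ℕ) : nClasses DUEquiv n =
    Nat.card (Set.range fun P : {P : List Step // InE P ∧ P.length = n} => duSet P.1) :=
  Nat.card_quot_eq_card_range _ fun _ _ => duEquiv_iff_duSet_eq

lemma nClasses_DUEquiv_zero : nClasses DUEquiv 0 = 1 := by
  rw [nClasses_DUEquiv_eq_card_range, Nat.card_eq_one_iff_exists]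
  refine ⟨⟨∅, ⟨[], InE_nil, rfl⟩, rfl⟩, ?_⟩
  rintro ⟨_, ⟨P, -, hP⟩, rfl⟩
  obtain rfl := List.length_eq_zero_iff.mp hP
  rfl

lemma nClasses_DUEquiv_one : nClasses DUEquiv 1 = 0 := by
  have : IsEmpty {P : List Step // InE P ∧ P.length = 1} :=
    ⟨fun P => length_ne_one_of_InE P.2.1 P.2.2⟩
  rw [nClasses_DUEquiv_eq_card_range, Set.range_eq_empty, Nat.card_of_isEmpty]

lemma nClasses_DUEquiv_eq_card_sparseSubsets {n : ℕ} (hn : 2 ≤ n) :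
    nClasses DUEquiv n = #(sparseSubsets (n - 3)) := by
  suffices h : (Set.range fun P : {P : List Step // InE P ∧ P.length = n} => duSet P.1) =
      sparseSubsets (n - 3) by
    rw [nClasses_DUEquiv_eq_card_range, h, Nat.card_coe_set_eq, Set.ncard_coe_finset]
  ext S
  constructor
  · rintro ⟨⟨P, hP, rfl⟩, rfl⟩
    exact duSet_mem_sparseSubsets hP
  · intro hS
    exact ⟨⟨canonPath n S, InE_canonPath hn hS, length_canonPath (by omega) S⟩,
      duSet_canonPath hn hS⟩

/-- The number `ℓ n` of DU-equivalence classes of paths of length `n` in ℰ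
satisfies `ℓ 0 = 1`, `ℓ 1 = 0`, `ℓ 2 = 1` and `ℓ n = ℓ (n-1) + ℓ (n-2)` for `n ≥ 3`. -/
theorem count_DUEquiv_classes :
    nClasses DUEquiv 0 = 1 ∧ nClasses DUEquiv 1 = 0 ∧ nClasses DUEquiv 2 = 1 ∧
    ∀ n, 3 ≤ n → nClasses DUEquiv n = nClasses DUEquiv (n - 1) + nClasses DUEquiv (n - 2) := by
  have hℓ := @nClasses_DUEquiv_eq_card_sparseSubsets
  refine ⟨nClasses_DUEquiv_zero, nClasses_DUEquiv_one, by rw [hℓ le_rfl]; decide, ?_⟩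
  intro n hn
  obtain rfl | rfl | h5 : n = 3 ∨ n = 4 ∨ 5 ≤ n := by omega
  · rw [hℓ (by norm_num), hℓ le_rfl, nClasses_DUEquiv_one]
    rfl
  · rw [hℓ (by norm_num), hℓ (by norm_num), hℓ le_rfl]; decide
  · obtain ⟨m, rfl⟩ := Nat.exists_eq_add_of_le' h5
    rw [hℓ (by omega), hℓ (by omega), hℓ (by omega)]
    exact card_sparseSubsets_add_two m
end
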